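/- arXiv:1401.5584 — 2 statements merged into one kernel-verified Lean document; each statement's English description precedes it below -/
import Mathlib

section
/- The tropical Cartan characteristic function is independent of the reduced representation: if (g₀,…,gₙ) and (g̃₀,…,g̃ₙ) are two reduced representations of the same tropical holomorphic curve f : R → TP^n, then with F(x) = max_j g_j(x) and F̃(x) = max_j g̃_j(x), one has (F(r)+F(−r))/2 − F(0) = (F̃(r)+F̃(−r))/2 − F̃(0) for all r. -/
open Set Filter

/-- A tropical meromorphic function: a continuous piecewise linear real function, i.e.
a continuous function that is affine on a one-sided neighbourhood of every point. -/
def TropMero (f : ℝ → ℝ) : Prop :=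
  Continuous f ∧ ∀ x : ℝ, ∃ ε > (0 : ℝ),
    (∃ a b : ℝ, ∀ y ∈ Set.Ico x (x + ε), f y = a * y + b) ∧
    (∃ a b : ℝ, ∀ y ∈ Set.Ioc (x - ε) x, f y = a * y + b)

/-- `ω_f(x)`: the jump of the derivative of `f` at `x` (right slope minus left slope).
`x` is a root of `f` if `ω_f(x) > 0` and a pole if `ω_f(x) < 0`. -/
noncomputable def omega (f : ℝ → ℝ) (x : ℝ) : ℝ :=
  derivWithin f (Set.Ici x) x - derivWithin f (Set.Iic x) x

/-- A tropical entire function: a tropical meromorphic function without poles,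
equivalently a convex one. -/
def TropEntire (f : ℝ → ℝ) : Prop := TropMero f ∧ ConvexOn ℝ Set.univ f

/-- The tropical proximity function `m(r, f) = (f⁺(r) + f⁺(-r))/2`. -/
noncomputable def mProx (f : ℝ → ℝ) (r : ℝ) : ℝ := (max (f r) 0 + max (f (-r)) 0) / 2

/-- The unintegrated counting function `n(t, f) = Σ_{|s| ≤ t, ω_f(s) < 0} |ω_f(s)|`. -/
noncomputable def nCount (f : ℝ → ℝ) (t : ℝ) : ℝ :=
  ∑ᶠ s ∈ {s : ℝ | |s| ≤ t ∧ omega f s < 0}, |omega f s|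

/-- The tropical counting function `N(r, f) = (1/2) ∫₀^r n(t, f) dt`. -/
noncomputable def NCount (f : ℝ → ℝ) (r : ℝ) : ℝ := (1 / 2) * ∫ t in (0 : ℝ)..r, nCount f t

/-- The tropical Nevanlinna characteristic `T(r, f) = m(r, f) + N(r, f)`. -/
noncomputable def Tchar (f : ℝ → ℝ) (r : ℝ) : ℝ := mProx f r + NCount f r

/-- A reduced representation of a tropical holomorphic curve: a tuple of tropical entire
functions with no root common to all of them. -/
def ReducedRepresentation (n : ℕ) (g : Fin (n + 1) → ℝ → ℝ) : Prop :=
  (∀ j, TropEntire (g j)) ∧ ¬ ∃ x : ℝ, ∀ j, 0 < omega (g j) x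

open Topology

/-!
For every `x` there are `j`, `k` such that `x` is a root of neither `g j` nor `g̃ k`; by
convexity both then have `ω = 0` at `x`. As `λ = g̃ i - g i` for every `i`, the slope jump `ω_λ(x)` equals both
`ω_{g̃ j}(x) ≥ 0` and `-ω_{g k}(x) ≤ 0`, so it vanishes: the piecewise linear `λ` is affine near
every point, hence affine on `ℝ`. Shifting every `g i` by `αx + β` shifts `F` by `αx + β`, and
`(F(r) + F(-r))/2 - F(0)` is blind to such a shift.
-/

variable {f g : ℝ → ℝ} {x : ℝ}

lemma hasDerivAt_affine (a b x : ℝ) : HasDerivAt (fun y => a * y + b) a x := by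
  simpa using ((hasDerivAt_id x).const_mul a).add_const b

lemma hasDerivWithinAt_Ici_of_eqOn_Ico {ε a b : ℝ} (hε : 0 < ε)
    (h : ∀ y ∈ Ico x (x + ε), f y = a * y + b) : HasDerivWithinAt f a (Ici x) x := by
  have hmem : Ico x (x + ε) ∈ 𝓝[Ici x] x := Ico_mem_nhdsGE (by linarith)
  exact (hasDerivAt_affine a b x).hasDerivWithinAt.congr_of_eventuallyEq (eventually_of_mem hmem h)
    (h x ⟨le_rfl, by linarith⟩)

lemma hasDerivWithinAt_Iic_of_eqOn_Ioc {ε a b : ℝ} (hε : 0 < ε)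
    (h : ∀ y ∈ Ioc (x - ε) x, f y = a * y + b) : HasDerivWithinAt f a (Iic x) x := by
  have hmem : Ioc (x - ε) x ∈ 𝓝[Iic x] x := Ioc_mem_nhdsLE (by linarith)
  exact (hasDerivAt_affine a b x).hasDerivWithinAt.congr_of_eventuallyEq (eventually_of_mem hmem h)
    (h x ⟨by linarith, le_rfl⟩)

namespace TropMero

lemma sub (hf : TropMero f) (hg : TropMero g) : TropMero (f - g) := by
  refine ⟨hf.1.sub hg.1, fun x => ?_⟩
  obtain ⟨ε, hε, ⟨a, b, hfR⟩, ⟨a', b', hfL⟩⟩ := hf.2 x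
  obtain ⟨δ, hδ, ⟨c, d, hgR⟩, ⟨c', d', hgL⟩⟩ := hg.2 x
  refine ⟨min ε δ, lt_min hε hδ, ⟨a - c, b - d, fun y hy => ?_⟩, ⟨a' - c', b' - d', fun y hy => ?_⟩⟩
  · have hyε : y ∈ Ico x (x + ε) := ⟨hy.1, by linarith [hy.2, min_le_left ε δ]⟩
    have hyδ : y ∈ Ico x (x + δ) := ⟨hy.1, by linarith [hy.2, min_le_right ε δ]⟩
    simp only [Pi.sub_apply, hfR y hyε, hgR y hyδ]
    ring
  · have hyε : y ∈ Ioc (x - ε) x := ⟨by linarith [hy.1, min_le_left ε δ], hy.2⟩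
    have hyδ : y ∈ Ioc (x - δ) x := ⟨by linarith [hy.1, min_le_right ε δ], hy.2⟩
    simp only [Pi.sub_apply, hfL y hyε, hgL y hyδ]
    ring

lemma differentiableWithinAt_Ici (hf : TropMero f) (x : ℝ) :
    DifferentiableWithinAt ℝ f (Ici x) x := by
  obtain ⟨ε, hε, ⟨a, b, hR⟩, -⟩ := hf.2 x
  exact (hasDerivWithinAt_Ici_of_eqOn_Ico hε hR).differentiableWithinAt

lemma differentiableWithinAt_Iic (hf : TropMero f) (x : ℝ) :
    DifferentiableWithinAt ℝ f (Iic x) x := by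
  obtain ⟨ε, hε, -, ⟨a, b, hL⟩⟩ := hf.2 x
  exact (hasDerivWithinAt_Iic_of_eqOn_Ioc hε hL).differentiableWithinAt

lemma omega_sub (hf : TropMero f) (hg : TropMero g) (x : ℝ) :
    omega (f - g) x = omega f x - omega g x := by
  simp only [omega]
  rw [derivWithin_sub (hf.differentiableWithinAt_Ici x) (hg.differentiableWithinAt_Ici x),
    derivWithin_sub (hf.differentiableWithinAt_Iic x) (hg.differentiableWithinAt_Iic x)]
  ring

lemma exists_eventually_eq_affine_of_omega_eq_zero (hf : TropMero f) (hx : omega f x = 0) :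
    ∃ a b : ℝ, ∀ᶠ y in 𝓝 x, f y = a * y + b := by
  obtain ⟨ε, hε, ⟨a, b, hR⟩, ⟨a', b', hL⟩⟩ := hf.2 x
  have hslope : a' = a := by
    rw [omega, (hasDerivWithinAt_Ici_of_eqOn_Ico hε hR).derivWithin (uniqueDiffWithinAt_Ici x),
      (hasDerivWithinAt_Iic_of_eqOn_Ioc hε hL).derivWithin (uniqueDiffWithinAt_Iic x)] at hx
    linarith
  have hintercept : b' = b := by
    have hxR := hR x ⟨le_rfl, by linarith⟩
    have hxL := hL x ⟨by linarith, le_rfl⟩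
    rw [hslope] at hxL
    linarith
  subst hslope hintercept
  refine ⟨a', b', eventually_of_mem
    (Ioo_mem_nhds (show x - ε < x by linarith) (show x < x + ε by linarith)) fun y hy => ?_⟩
  rcases le_or_gt x y with hxy | hyx
  · exact hR y ⟨hxy, hy.2⟩
  · exact hL y ⟨hy.1, hyx.le⟩

end TropMero

lemma TropEntire.omega_nonneg (hf : TropEntire f) (x : ℝ) : 0 ≤ omega f x := by
  have hleft : derivWithin f (Iio x) x = derivWithin f (Iic x) x :=
    ((hf.1.differentiableWithinAt_Iic x).hasDerivWithinAt.mono Iio_subset_Iic_self).derivWithin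
      (uniqueDiffWithinAt_Iio x)
  have hle := hf.2.leftDeriv_le_rightDeriv_of_mem_interior (x := x) (by simp)
  rw [hleft, derivWithin_Ioi_eq_Ici] at hle
  exact sub_nonneg.mpr hle

lemma exists_eq_affine_of_eventually_eq_affine
    (h : ∀ x, ∃ a b : ℝ, ∀ᶠ y in 𝓝 x, f y = a * y + b) :
    ∃ a b : ℝ, ∀ y, f y = a * y + b := by
  have hderiv : ∀ x, ∃ a, ∀ᶠ y in 𝓝 x, HasDerivAt f a y := by
    intro x
    obtain ⟨a, b, hab⟩ := h x
    refine ⟨a, hab.eventually_nhds.mono fun y hy => ?_⟩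
    exact (hasDerivAt_affine a b y).congr_of_eventuallyEq hy
  have hdiff : Differentiable ℝ f := fun x =>
    let ⟨_, ha⟩ := hderiv x; ha.self_of_nhds.differentiableAt
  have hconst : IsLocallyConstant (deriv f) := by
    refine (IsLocallyConstant.iff_eventually_eq _).mpr fun x => ?_
    obtain ⟨a, ha⟩ := hderiv x
    filter_upwards [ha] with y hy
    rw [hy.deriv, ha.self_of_nhds.deriv]
  obtain ⟨c, hc⟩ : ∃ c, ∀ y, deriv f y = c :=
    ⟨deriv f 0, fun y => hconst.apply_eq_of_preconnectedSpace y 0⟩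
  have hshift : ∀ y, HasDerivAt (fun z => f z - c * z) 0 y := fun y => by
    simpa [hc y] using
      (hdiff y).hasDerivAt.fun_sub ((hasDerivAt_id y).const_mul c)
  refine ⟨c, f 0, fun y => ?_⟩
  have := is_const_of_deriv_eq_zero (fun z => (hshift z).differentiableAt)
    (fun z => (hshift z).deriv) y 0
  simp only [mul_zero, sub_zero] at this
  linarith

namespace ReducedRepresentation

variable {n : ℕ} {g gt : Fin (n + 1) → ℝ → ℝ}

lemma exists_omega_eq_zero (hg : ReducedRepresentation n g) (x : ℝ) :
    ∃ j, omega (g j) x = 0 := by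
  obtain ⟨j, hj⟩ := not_forall.mp (not_exists.mp hg.2 x)
  exact ⟨j, le_antisymm (not_lt.mp hj) ((hg.1 j).omega_nonneg x)⟩

lemma exists_affine_shift (hg : ReducedRepresentation n g) (hgt : ReducedRepresentation n gt)
    (hsame : ∀ x : ℝ, ∃ lam : ℝ, ∀ j, gt j x = g j x + lam) :
    ∃ a b : ℝ, ∀ x j, gt j x = g j x + (a * x + b) := by
  set lam := gt 0 - g 0
  have hlam : ∀ j, gt j - g j = lam := fun j => funext fun x => by
    obtain ⟨l, hl⟩ := hsame x
    simp only [lam, Pi.sub_apply, hl j, hl 0]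
    ring
  have homega : ∀ x j, omega lam x = omega (gt j) x - omega (g j) x := fun x j => by
    rw [← hlam j, TropMero.omega_sub (hgt.1 j).1 (hg.1 j).1]
  have hflat : ∀ x, omega lam x = 0 := fun x => by
    obtain ⟨j, hj⟩ := hg.exists_omega_eq_zero x
    obtain ⟨k, hk⟩ := hgt.exists_omega_eq_zero x
    linarith [homega x j, homega x k, (hgt.1 j).omega_nonneg x, (hg.1 k).omega_nonneg x]
  have hmero : TropMero lam := (hgt.1 0).1.sub (hg.1 0).1
  obtain ⟨a, b, hab⟩ := exists_eq_affine_of_eventually_eq_affine fun x =>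
    hmero.exists_eventually_eq_affine_of_omega_eq_zero (hflat x)
  refine ⟨a, b, fun x j => ?_⟩
  rw [← hab x, ← hlam j, Pi.sub_apply]
  ring

end ReducedRepresentation

/-- The tropical Cartan characteristic function is independent of the reduced
representation: if `(g₀,…,gₙ)` and `(g̃₀,…,g̃ₙ)` are two reduced representations of the
same tropical holomorphic curve (for each `x` there is `λ(x)` with
`g̃_j(x) = g_j(x) + λ(x)` for all `j`), then with `F = max_j g_j`, `F̃ = max_j g̃_j`,
one has `(F(r)+F(−r))/2 − F(0) = (F̃(r)+F̃(−r))/2 − F̃(0)` for all `r`. -/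
theorem cartan_characteristic_well_defined (n : ℕ) (g gt : Fin (n + 1) → ℝ → ℝ)
    (hg : ReducedRepresentation n g) (hgt : ReducedRepresentation n gt)
    (hsame : ∀ x : ℝ, ∃ lam : ℝ, ∀ j, gt j x = g j x + lam) :
    ∀ r : ℝ,
      ((Finset.univ.sup' Finset.univ_nonempty fun j => g j r) +
          (Finset.univ.sup' Finset.univ_nonempty fun j => g j (-r))) / 2 -
        (Finset.univ.sup' Finset.univ_nonempty fun j => g j 0) =
      ((Finset.univ.sup' Finset.univ_nonempty fun j => gt j r) +
          (Finset.univ.sup' Finset.univ_nonempty fun j => gt j (-r))) / 2 -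
        (Finset.univ.sup' Finset.univ_nonempty fun j => gt j 0) := by
  intro r
  obtain ⟨a, b, hshift⟩ := hg.exists_affine_shift hgt hsame
  simp only [hshift, ← Finset.sup'_add]
  ring
end

section
/- Tropical Jensen formula: for any tropical meromorphic function f, T(r, f) − T(r, −f) = f(0) for all r ≥ 0. -/
open Set Filter

/-!
Write `f'₊(x)`, `f'₋(x)` for the one-sided slopes, so that `ω_f(x) = f'₊(x) - f'₋(x)`.
Since `max x 0 - max (-x) 0 = x`, the proximity functions contribute `(f(r) + f(-r))/2`, and
since `ω_{-f} = -ω_f`, the counting functions satisfy `n(t, -f) - n(t, f) = Σ_{|s| ≤ t} ω_f(s)`.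
The breakpoints of `f` are isolated and the jumps of the slope telescope,
`Σ_{a ≤ s ≤ b} ω_f(s) = f'₊(b) - f'₋(a)`, because `x ↦ f'₊(x) - Σ_{a ≤ s ≤ x} ω_f(s)` is
locally constant. Hence `n(t, -f) - n(t, f)` is the right derivative of `u ↦ f(u) + f(-u)`, and
integrating over `[0, r]` gives `N(r, f) - N(r, -f) = f(0) - (f(r) + f(-r))/2`.
-/

open Topology Function

theorem finsum_mem_Icc_eq_add_of_eqOn_zero {g : ℝ → ℝ} {a x y : ℝ} (hxy : x < y)
    (hay : a ≤ y) (hg : ∀ z ∈ Ioo x y, g z = 0) (hfin : (Icc a x ∩ support g).Finite) :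
    ∑ᶠ s ∈ Icc a y, g s = ∑ᶠ s ∈ Icc a x, g s + g y := by
  have hsplit : ∀ z ∈ support g, z ∈ Icc a y ↔ z ∈ Icc a x ∪ {y} := by
    intro z hz
    have : z ∉ Ioo x y := fun h => hz (hg z h)
    simp only [mem_Icc, mem_union, mem_singleton_iff, mem_Ioo, not_and_or, not_lt] at this ⊢
    constructor
    · rintro ⟨haz, hzy⟩
      rcases this with h | h
      · exact Or.inl ⟨haz, h⟩
      · exact Or.inr (le_antisymm hzy h)
    · rintro (⟨haz, hzx⟩ | rfl)
      · exact ⟨haz, hzx.trans hxy.le⟩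
      · exact ⟨hay, le_rfl⟩
  rw [finsum_mem_inter_support_eq' g _ _ hsplit, finsum_mem_union' _ hfin
    ((finite_singleton y).inter_of_left _), finsum_mem_singleton]
  exact disjoint_singleton_right.2 fun h => hxy.not_ge h.2

theorem finsum_mem_le_finsum_mem_of_subset {α : Type*} {g : α → ℝ} (hg : ∀ i, 0 ≤ g i)
    {s t : Set α} (hst : s ⊆ t) (ht : (t ∩ support g).Finite) :
    ∑ᶠ i ∈ s, g i ≤ ∑ᶠ i ∈ t, g i := by
  have hs : (s ∩ support g).Finite := ht.subset (inter_subset_inter_left _ hst)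
  rw [← finsum_mem_inter_support, ← finsum_mem_inter_support (s := t),
    finsum_mem_eq_finite_toFinset_sum _ hs, finsum_mem_eq_finite_toFinset_sum _ ht]
  exact Finset.sum_le_sum_of_subset_of_nonneg
    (Finite.toFinset_subset_toFinset.2 (inter_subset_inter_left _ hst)) fun i _ _ => hg i

theorem omega_neg (f : ℝ → ℝ) (x : ℝ) : omega (fun y => -f y) x = -omega f x := by
  change derivWithin (-f) (Ici x) x - derivWithin (-f) (Iic x) x = -omega f x
  rw [omega, derivWithin.neg, derivWithin.neg]
  ring

theorem mProx_sub_mProx_neg (f : ℝ → ℝ) (r : ℝ) :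
    mProx f r - mProx (fun x => -f x) r = (f r + f (-r)) / 2 := by
  have h := posPart_sub_negPart (f r)
  have h' := posPart_sub_negPart (f (-r))
  simp only [mProx, posPart_def, negPart_def] at *
  linarith

theorem nCount_eq_finsum_negPart (f : ℝ → ℝ) (t : ℝ) :
    nCount f t = ∑ᶠ s ∈ Icc (-t) t, (omega f s)⁻ := by
  rw [nCount, finsum_mem_congr rfl fun s hs =>
    (abs_of_neg hs.2).trans (negPart_eq_neg.2 hs.2.le).symm]
  refine finsum_mem_inter_support_eq' _ _ _ fun s hs => ?_
  have : omega f s < 0 := by simpa [negPart_eq_zero] using hs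
  simp [abs_le, this]

namespace TropMero

variable {f : ℝ → ℝ}

theorem neg (hf : TropMero f) : TropMero fun x => -f x := by
  refine ⟨hf.1.neg, fun x => ?_⟩
  obtain ⟨ε, hε, ⟨a, b, hab⟩, ⟨a', b', hab'⟩⟩ := hf.2 x
  exact ⟨ε, hε, ⟨-a, -b, fun y hy => by simp only [hab y hy]; ring⟩,
    ⟨-a', -b', fun y hy => by simp only [hab' y hy]; ring⟩⟩

theorem hasDerivWithinAt_Ici_and_eventually_hasDerivAt (hf : TropMero f) (x : ℝ) :
    HasDerivWithinAt f (derivWithin f (Ici x) x) (Ici x) x ∧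
      ∀ᶠ y in 𝓝[>] x, HasDerivAt f (derivWithin f (Ici x) x) y := by
  obtain ⟨ε, hε, ⟨a, b, hab⟩, -⟩ := hf.2 x
  have hxε : x < x + ε := by linarith
  have hx : HasDerivWithinAt f a (Ici x) x :=
    ((hasDerivAt_const_mul a).add_const b).hasDerivWithinAt.congr_of_eventuallyEq
      (eventually_of_mem (Ico_mem_nhdsGE hxε) hab) (hab x ⟨le_rfl, hxε⟩)
  rw [hx.derivWithin (uniqueDiffWithinAt_Ici x)]
  refine ⟨hx, ?_⟩
  filter_upwards [Ioo_mem_nhdsGT hxε] with y hy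
  exact ((hasDerivAt_const_mul a).add_const b).congr_of_eventuallyEq
    (eventually_of_mem (Ioo_mem_nhds hy.1 hy.2) fun z hz => hab z ⟨hz.1.le, hz.2⟩)

theorem hasDerivWithinAt_Iic_and_eventually_hasDerivAt (hf : TropMero f) (x : ℝ) :
    HasDerivWithinAt f (derivWithin f (Iic x) x) (Iic x) x ∧
      ∀ᶠ y in 𝓝[<] x, HasDerivAt f (derivWithin f (Iic x) x) y := by
  obtain ⟨ε, hε, -, ⟨a, b, hab⟩⟩ := hf.2 x
  have hxε : x - ε < x := by linarith
  have hx : HasDerivWithinAt f a (Iic x) x :=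
    ((hasDerivAt_const_mul a).add_const b).hasDerivWithinAt.congr_of_eventuallyEq
      (eventually_of_mem (Ioc_mem_nhdsLE hxε) hab) (hab x ⟨hxε, le_rfl⟩)
  rw [hx.derivWithin (uniqueDiffWithinAt_Iic x)]
  refine ⟨hx, ?_⟩
  filter_upwards [Ioo_mem_nhdsLT hxε] with y hy
  exact ((hasDerivAt_const_mul a).add_const b).congr_of_eventuallyEq
    (eventually_of_mem (Ioo_mem_nhds hy.1 hy.2) fun z hz => hab z ⟨hz.1, hz.2.le⟩)

theorem eventually_derivWithin_nhdsGT (hf : TropMero f) (x : ℝ) :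
    ∀ᶠ y in 𝓝[>] x, derivWithin f (Ici y) y = derivWithin f (Ici x) x ∧
      derivWithin f (Iic y) y = derivWithin f (Ici x) x := by
  filter_upwards [(hf.hasDerivWithinAt_Ici_and_eventually_hasDerivAt x).2] with y hy
  exact ⟨hy.hasDerivWithinAt.derivWithin (uniqueDiffWithinAt_Ici y),
    hy.hasDerivWithinAt.derivWithin (uniqueDiffWithinAt_Iic y)⟩

theorem eventually_derivWithin_nhdsLT (hf : TropMero f) (x : ℝ) :
    ∀ᶠ y in 𝓝[<] x, derivWithin f (Ici y) y = derivWithin f (Iic x) x ∧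
      derivWithin f (Iic y) y = derivWithin f (Iic x) x := by
  filter_upwards [(hf.hasDerivWithinAt_Iic_and_eventually_hasDerivAt x).2] with y hy
  exact ⟨hy.hasDerivWithinAt.derivWithin (uniqueDiffWithinAt_Ici y),
    hy.hasDerivWithinAt.derivWithin (uniqueDiffWithinAt_Iic y)⟩

theorem eventually_omega_eq_zero (hf : TropMero f) (x : ℝ) :
    ∀ᶠ y in 𝓝[≠] x, omega f y = 0 := by
  rw [← nhdsLT_sup_nhdsGT, eventually_sup]
  constructor
  · filter_upwards [hf.eventually_derivWithin_nhdsLT x] with y hy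
    rw [omega, hy.1, hy.2, sub_self]
  · filter_upwards [hf.eventually_derivWithin_nhdsGT x] with y hy
    rw [omega, hy.1, hy.2, sub_self]

theorem finite_inter_support_omega (hf : TropMero f) {K : Set ℝ} (hK : IsCompact K) :
    (K ∩ support (omega f)).Finite := by
  have hcod : (support (omega f))ᶜ ∈ codiscreteWithin K := by
    rw [mem_codiscreteWithin_iff_forall_mem_nhdsNE]
    intro x _
    filter_upwards [hf.eventually_omega_eq_zero x] with y hy
    exact Or.inl (notMem_support.2 hy)
  simpa [sdiff_compl] using hK.finite_sdiff_of_mem_codiscreteWithin hcod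

theorem eventually_derivWithin_sub_finsum_mem_Icc_omega (hf : TropMero f) {a x : ℝ}
    (hax : a ≤ x) :
    ∀ᶠ y in 𝓝 x, derivWithin f (Ici y) y - ∑ᶠ s ∈ Icc a y, omega f s =
      derivWithin f (Ici x) x - ∑ᶠ s ∈ Icc a x, omega f s := by
  have hfin : ∀ y, (Icc a y ∩ support (omega f)).Finite := fun _ =>
    hf.finite_inter_support_omega isCompact_Icc
  rw [← nhdsNE_sup_pure, ← nhdsLT_sup_nhdsGT, eventually_sup, eventually_sup, eventually_pure]
  refine ⟨⟨?_, ?_⟩, rfl⟩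
  · obtain ⟨l, hl, hzero⟩ := mem_nhdsLT_iff_exists_Ioo_subset.1
      ((hf.eventually_omega_eq_zero x).filter_mono (nhdsLT_le_nhdsNE x))
    filter_upwards [hf.eventually_derivWithin_nhdsLT x, Ioo_mem_nhdsLT hl] with y hy hyx
    -- the jump of the right slope at `x` is the new summand `ω_f(x)`
    rw [hy.1, finsum_mem_Icc_eq_add_of_eqOn_zero hyx.2 hax
      (fun z hz => hzero ⟨hyx.1.trans hz.1, hz.2⟩) (hfin y), omega]
    ring
  · obtain ⟨u, hu, hzero⟩ := mem_nhdsGT_iff_exists_Ioo_subset.1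
      ((hf.eventually_omega_eq_zero x).filter_mono (nhdsGT_le_nhdsNE x))
    filter_upwards [hf.eventually_derivWithin_nhdsGT x, Ioo_mem_nhdsGT hu] with y hy hxy
    rw [hy.1, finsum_mem_Icc_eq_add_of_eqOn_zero hxy.1 (hax.trans hxy.1.le)
      (fun z hz => hzero ⟨hz.1, hz.2.trans hxy.2⟩) (hfin x), show omega f y = 0 from hzero hxy,
      add_zero]

theorem finsum_mem_Icc_omega (hf : TropMero f) {a b : ℝ} (hab : a ≤ b) :
    ∑ᶠ s ∈ Icc a b, omega f s = derivWithin f (Ici b) b - derivWithin f (Iic a) a := by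
  have hconst := isPreconnected_Icc.induction₂
    (fun y z => derivWithin f (Ici y) y - ∑ᶠ s ∈ Icc a y, omega f s =
      derivWithin f (Ici z) z - ∑ᶠ s ∈ Icc a z, omega f s)
    (fun x hx => ((hf.eventually_derivWithin_sub_finsum_mem_Icc_omega hx.1).filter_mono
      nhdsWithin_le_nhds).mono fun _ h => h.symm)
    (fun _ _ _ _ _ _ => Eq.trans) (fun _ _ _ _ => Eq.symm)
    (left_mem_Icc.2 hab) (right_mem_Icc.2 hab)
  rw [Icc_self, finsum_mem_singleton, omega] at hconst
  linarith

theorem hasDerivWithinAt_add_comp_neg (hf : TropMero f) (t : ℝ) :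
    HasDerivWithinAt (fun u => f u + f (-u))
      (derivWithin f (Ici t) t - derivWithin f (Iic (-t)) (-t)) (Ici t) t := by
  have hneg : HasDerivWithinAt (fun u => f (-u)) (-derivWithin f (Iic (-t)) (-t)) (Ici t) t := by
    have hmaps : MapsTo (fun u : ℝ => -u) (Ici t) (Iic (-t)) := fun _ hu =>
      mem_Iic.2 (neg_le_neg hu)
    simpa [comp_def] using (hf.hasDerivWithinAt_Iic_and_eventually_hasDerivAt (-t)).1.comp t
      (hasDerivAt_neg t).hasDerivWithinAt hmaps
  rw [sub_eq_add_neg]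
  exact (hf.hasDerivWithinAt_Ici_and_eventually_hasDerivAt t).1.add hneg

theorem monotone_nCount (hf : TropMero f) : Monotone (nCount f) := by
  intro t₁ t₂ ht
  rw [nCount_eq_finsum_negPart, nCount_eq_finsum_negPart]
  exact finsum_mem_le_finsum_mem_of_subset (fun s => negPart_nonneg _)
    (Icc_subset_Icc (neg_le_neg ht) ht)
    ((hf.finite_inter_support_omega isCompact_Icc).subset
      (inter_subset_inter_right _ (support_comp_subset negPart_zero _)))

theorem nCount_neg_sub_nCount (hf : TropMero f) {t : ℝ} (ht : 0 ≤ t) :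
    nCount (fun x => -f x) t - nCount f t
      = derivWithin f (Ici t) t - derivWithin f (Iic (-t)) (-t) := by
  have hfin := hf.finite_inter_support_omega (isCompact_Icc (a := -t) (b := t))
  have hfin' : (Icc (-t) t ∩ support fun s => (omega f s)⁻).Finite :=
    hfin.subset (inter_subset_inter_right _ (support_comp_subset negPart_zero _))
  have hpos : ∀ s, (omega (fun x => -f x) s)⁻ = omega f s + (omega f s)⁻ := fun s => by
    have := posPart_sub_negPart (omega f s)
    rw [omega_neg, negPart_neg]
    linarith
  rw [nCount_eq_finsum_negPart, nCount_eq_finsum_negPart, finsum_mem_congr rfl fun s _ => hpos s,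
    finsum_mem_add_distrib' hfin hfin', hf.finsum_mem_Icc_omega (by linarith)]
  ring

theorem NCount_sub_NCount_neg (hf : TropMero f) {r : ℝ} (hr : 0 ≤ r) :
    NCount f r - NCount (fun x => -f x) r = f 0 - (f r + f (-r)) / 2 := by
  have hint : ∀ g, TropMero g → IntervalIntegrable (nCount g) MeasureTheory.volume 0 r :=
    fun g hg => hg.monotone_nCount.intervalIntegrable
  have hcont : ContinuousOn (fun u => f u + f (-u)) (Icc 0 r) :=
    (hf.1.add (hf.1.comp continuous_neg)).continuousOn
  have hftc := intervalIntegral.integral_eq_sub_of_hasDeriv_right_of_le hr hcont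
    (fun t ht => by
      rw [hf.nCount_neg_sub_nCount ht.1.le]
      exact (hf.hasDerivWithinAt_add_comp_neg t).mono Ioi_subset_Ici_self)
    ((hint _ hf.neg).sub (hint f hf))
  rw [intervalIntegral.integral_sub (hint _ hf.neg) (hint f hf), neg_zero] at hftc
  simp only [NCount]
  linarith

end TropMero

/-- Tropical Jensen formula: for any tropical meromorphic function `f`,
`T(r, f) − T(r, 1∘ ⊘ f) = f(0)` for all `r ≥ 0`, where `1∘ ⊘ f = −f`. -/
theorem tropical_jensen_formula (f : ℝ → ℝ) (hf : TropMero f) :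
    ∀ r : ℝ, 0 ≤ r → Tchar f r - Tchar (fun x => -f x) r = f 0 := by
  intro r hr
  have hm := mProx_sub_mProx_neg f r
  have hN := hf.NCount_sub_NCount_neg hr
  simp only [Tchar]
  linarith
end
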